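/- arXiv:2512.22461 — 3 statements merged into one kernel-verified Lean document; each statement's English description precedes it below -/
import Mathlib

section
/- For all α, β, γ, δ ∈ F, one has the product formula χ(α,β)·χ(γ,δ) = χ(α+γ, αγ^r + β + δ) in SL(4,F). -/
open Matrix

noncomputable section

/-- `r = 2^((m+1)/2)`. -/
def szr (m : ℕ) : ℕ := 2 ^ ((m + 1) / 2)

/-- The Suzuki group generator `χ(α,β)`, a lower unitriangular 4×4 matrix. -/
def szchi {F : Type*} [Field F] (m : ℕ) (α β : F) : Matrix (Fin 4) (Fin 4) F :=
  !![1, 0, 0, 0;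
     α, 1, 0, 0;
     α ^ (1 + szr m) + β, α ^ szr m, 1, 0;
     α ^ (2 + szr m) + α * β + β ^ szr m, β, α, 1]

/-- the product formula
`χ(α,β)·χ(γ,δ) = χ(α+γ, αγ^r + β + δ)` in `SL(4,F)`. -/
theorem statement_0 (m : ℕ) (hm : Odd m) (hm3 : 3 ≤ m)
    (F : Type*) [Field F] [Fintype F] (hF : Fintype.card F = 2 ^ m)
    (α β γ δ : F) :
    szchi m α β * szchi m γ δ = szchi m (α + γ) (α * γ ^ szr m + β + δ) := by
  have hchar : CharP F 2 := by
    have h0 : ((2:ℕ):F) = 0 := by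
      have := FiniteField.cast_card_eq_zero F
      rw [hF] at this
      push_cast at this
      have h2m : (2:F) ^ m = 0 := by exact_mod_cast this
      exact_mod_cast pow_eq_zero_iff (show m ≠ 0 by omega) |>.mp h2m
    have hp := CharP.char_is_prime F (ringChar F)
    have h2 : ringChar F = 2 := ((Nat.prime_dvd_prime_iff_eq hp Nat.prime_two).mp
      ((CharP.cast_eq_zero_iff F (ringChar F) 2).mp h0))
    exact h2 ▸ ringChar.charP F
  haveI := hchar
  haveI : Fact (Nat.Prime 2) := ⟨Nat.prime_two⟩
  have h2 : (2:F) = 0 := by exact_mod_cast (CharP.cast_eq_zero F 2)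
  have hfr : ∀ a b : F, (a + b) ^ szr m = a ^ szr m + b ^ szr m := fun a b =>
    add_pow_char_pow a b 2 ((m + 1) / 2)
  have h1 : (α + γ) ^ szr m = α ^ szr m + γ ^ szr m := hfr α γ
  obtain ⟨k, hk⟩ := hm
  have hrr : szr m * szr m = 2 ^ m * 2 := by
    rw [szr, ← pow_add]
    have h : (m + 1) / 2 + (m + 1) / 2 = m + 1 := by omega
    rw [h, pow_succ]
  have hc : γ ^ (2 ^ m) = γ := by rw [← hF]; exact FiniteField.pow_card γ
  have hg2 : (γ ^ szr m) ^ szr m = γ ^ 2 := by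
    rw [← pow_mul, hrr, pow_mul, hc]
  have hE : (α * γ ^ szr m + β + δ) ^ szr m
      = α ^ szr m * γ ^ 2 + β ^ szr m + δ ^ szr m := by
    rw [hfr, hfr, mul_pow, hg2]
  ext i j
  fin_cases i <;> fin_cases j <;>
    simp [szchi, Matrix.mul_apply, Fin.sum_univ_four]
  · linear_combination (-(α + γ)) * h1 - α * γ ^ szr m * h2
  · linear_combination -h1
  · linear_combination (-(α + γ)^2) * h1 - hE -
      (α^2 * γ ^ szr m + α^(1 + szr m) * γ + α * γ^(1 + szr m) + α ^ szr m * γ^2) * h2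
  · ring
end
end

section
/- For all α, β, x, y ∈ F and all k ∈ F^×, the conjugate χ(α,β)^{χ(x,y)κ(k)} := (χ(x,y)κ(k))^{-1}·χ(α,β)·(χ(x,y)κ(k)) equals χ(αk, (αx^r + xα^r + β)k^{1+r}). -/
/-!
Since `r ^ 2 = 2q`, the map `a ↦ a ^ r` squares to the Frobenius `a ↦ a ^ 2` on `F`. With this and
characteristic 2 the matrices `χ` multiply by the law `χ(a,b) χ(c,d) = χ(a + c, b + d + a c^r)`,
so `χ(α,β) χ(x,y) = χ(x,y) χ(α, αx^r + xα^r + β)`. Conjugation by the diagonal `κ(k)` scales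
entry `(i,j)` by `κ_j / κ_i`, which turns `χ(a,b)` into `χ(ak, b k^{1+r})`.
-/

open Matrix

noncomputable section

/-- `κ(k)`. -/
def szkappa {F : Type*} [Field F] (m : ℕ) (k : F) : Matrix (Fin 4) (Fin 4) F :=
  Matrix.diagonal ![k ^ (szr m / 2 + 1), k ^ (szr m / 2),
    k ^ (-(szr m / 2 : ℤ)), k ^ (-(szr m / 2 : ℤ) - 1)]

section

variable {F : Type*} [Field F] {m : ℕ}

theorem szr_mul_szr_of_odd (hm : Odd m) : szr m * szr m = 2 ^ m * 2 := by
  obtain ⟨n, rfl⟩ := hm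
  rw [szr, ← pow_add, ← pow_succ]
  congr 1
  omega

theorem pow_szr_pow_szr_of_card [Fintype F] (hm : Odd m)
    (hF : Fintype.card F = 2 ^ m) (a : F) : (a ^ szr m) ^ szr m = a ^ 2 := by
  rw [← pow_mul, szr_mul_szr_of_odd hm, pow_mul, ← hF, FiniteField.pow_card]

theorem two_dvd_szr (hm : m ≠ 0) : 2 ∣ szr m :=
  dvd_pow_self 2 (by omega)

theorem szkappa_eq_diagonal (k : F) : szkappa m k = diagonal
    ![k ^ (szr m / 2 + 1), k ^ (szr m / 2), (k ^ (szr m / 2))⁻¹, (k ^ (szr m / 2 + 1))⁻¹] := by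
  have hdiv : (szr m : ℤ) / 2 = ((szr m / 2 : ℕ) : ℤ) := (Int.natCast_div _ _).symm
  have hsucc : -((szr m / 2 : ℕ) : ℤ) - 1 = -((szr m / 2 + 1 : ℕ) : ℤ) := by push_cast; ring
  rw [szkappa, hdiv, hsucc, _root_.zpow_neg, _root_.zpow_neg, zpow_natCast, zpow_natCast]

theorem szkappa_mul (k l : F) : szkappa m k * szkappa m l = szkappa m (k * l) := by
  rw [szkappa, szkappa, szkappa, diagonal_mul_diagonal]
  congr 1
  funext i
  fin_cases i <;> simp [mul_pow, mul_zpow, mul_comm]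

theorem szkappa_one : szkappa m (1 : F) = 1 := by
  rw [szkappa, ← diagonal_one]
  congr 1
  funext i
  fin_cases i <;> simp

theorem szchi_zero_zero : szchi m (0 : F) 0 = 1 := by
  have hr : szr m ≠ 0 := by simp [szr]
  ext i j
  fin_cases i <;> fin_cases j <;> simp [szchi, hr, one_apply]

theorem szchi_mul_szkappa (hm : m ≠ 0) (hr : ∀ a : F, (a ^ szr m) ^ szr m = a ^ 2) {k : F}
    (hk : k ≠ 0) (a b : F) :
    szchi m a b * szkappa m k = szkappa m k * szchi m (a * k) (b * k ^ (1 + szr m)) := by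
  have hhalf : (k ^ (szr m / 2)) ^ 2 = k ^ szr m := by
    rw [← pow_mul, Nat.div_mul_cancel (two_dvd_szr hm)]
  ext i j
  rw [szkappa_eq_diagonal, mul_diagonal, diagonal_mul]
  fin_cases i <;> fin_cases j <;> simp [szchi, mul_pow, pow_add, hr] <;> field_simp <;> rw [hhalf]

variable [CharP F 2]

theorem szchi_mul_szchi (hr : ∀ a : F, (a ^ szr m) ^ szr m = a ^ 2) (a b c d : F) :
    szchi m a b * szchi m c d = szchi m (a + c) (b + d + a * c ^ szr m) := by
  have hfrob : ∀ u v : F, (u + v) ^ szr m = u ^ szr m + v ^ szr m := fun u v =>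
    add_pow_char_pow u v 2 _
  ext i j
  fin_cases i <;> fin_cases j <;>
    simp [szchi, mul_apply, Fin.sum_univ_four, pow_add, hfrob, mul_pow, hr] <;> grind

theorem szchi_mul_szchi_comm (hr : ∀ a : F, (a ^ szr m) ^ szr m = a ^ 2) (a b c d : F) :
    szchi m a b * szchi m c d = szchi m c d * szchi m a (a * c ^ szr m + c * a ^ szr m + b) := by
  rw [szchi_mul_szchi hr, szchi_mul_szchi hr]
  congr 1 <;> grind

theorem szchi_mul_szchi_add_pow_eq_one (hr : ∀ a : F, (a ^ szr m) ^ szr m = a ^ 2) (a b : F) :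
    szchi m a b * szchi m a (b + a ^ (1 + szr m)) = 1 := by
  rw [szchi_mul_szchi hr, ← szchi_zero_zero]
  congr 1 <;> grind

theorem szchi_mul_szchi_mul_szkappa (hm : m ≠ 0) (hr : ∀ a : F, (a ^ szr m) ^ szr m = a ^ 2)
    {k : F} (hk : k ≠ 0) (α β x y : F) :
    szchi m α β * (szchi m x y * szkappa m k) = szchi m x y * szkappa m k *
      szchi m (α * k) ((α * x ^ szr m + x * α ^ szr m + β) * k ^ (1 + szr m)) := by
  rw [← mul_assoc, szchi_mul_szchi_comm hr, mul_assoc, szchi_mul_szkappa hm hr hk, mul_assoc]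

theorem szchi_mul_szkappa_mul_szkappa_inv_mul_szchi
    (hr : ∀ a : F, (a ^ szr m) ^ szr m = a ^ 2) {k : F} (hk : k ≠ 0) (x y : F) :
    szchi m x y * szkappa m k * (szkappa m k⁻¹ * szchi m x (y + x ^ (1 + szr m))) = 1 := by
  rw [mul_assoc, ← mul_assoc (szkappa m k), szkappa_mul, mul_inv_cancel₀ hk, szkappa_one,
    one_mul, szchi_mul_szchi_add_pow_eq_one hr]

end

theorem statement_3_general (m : ℕ) (hm : Odd m)
    (F : Type*) [Field F] [Fintype F] (hF : Fintype.card F = 2 ^ m)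
    (α β x y : F) (k : F) (hk : k ≠ 0) :
    (szchi m x y * szkappa m k)⁻¹ * szchi m α β * (szchi m x y * szkappa m k)
      = szchi m (α * k) ((α * x ^ szr m + x * α ^ szr m + β) * k ^ (1 + szr m)) := by
  have : CharP F 2 := charP_of_card_eq_prime_pow hF
  have hr := pow_szr_pow_szr_of_card hm hF
  have hP := isUnit_det_of_right_inverse (szchi_mul_szkappa_mul_szkappa_inv_mul_szchi hr hk x y)
  rw [mul_assoc, szchi_mul_szchi_mul_szkappa hm.pos.ne' hr hk,
    nonsing_inv_mul_cancel_left _ _ hP]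

/-- `χ(α,β)^{χ(x,y)κ(k)} = χ(αk, (αx^r + xα^r + β)k^{1+r})`. -/
theorem statement_3 (m : ℕ) (hm : Odd m) (hm3 : 3 ≤ m)
    (F : Type*) [Field F] [Fintype F] (hF : Fintype.card F = 2 ^ m)
    (α β x y : F) (k : F) (hk : k ≠ 0) :
    (szchi m x y * szkappa m k)⁻¹ * szchi m α β * (szchi m x y * szkappa m k)
      = szchi m (α * k) ((α * x ^ szr m + x * α ^ szr m + β) * k ^ (1 + szr m)) :=
  statement_3_general m hm F hF α β x y k hk
end
end

section
/- For all a, x, y, z ∈ F and k ∈ F^×, the matrix χ(0,0,a) commutes with χ(x,y,z), and χ(0,0,a)^{χ(x,y,z)h(k)} = χ(0,0,k^{−1}a), where g^h denotes h^{-1}gh. -/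
open Matrix

noncomputable section

/-- `r = 3^((m+1)/2)`. -/
def reer (m : ℕ) : ℕ := 3 ^ ((m + 1) / 2)

/-- `t = 3^((m-1)/2)`, so that `x^ϑ = x^t` and `x^{3ϑ} = x^r`. -/
def reet (m : ℕ) : ℕ := 3 ^ ((m - 1) / 2)

/-- The Ree group generator `α(x)`. -/
def reeAlpha {F : Type*} [Field F] (m : ℕ) (x : F) : Matrix (Fin 7) (Fin 7) F :=
  !![1, -x ^ reet m, -x ^ (reet m + 1), 0, x ^ (3 * reet m + 1), 0, x ^ (4 * reet m + 2);
     0, 1, -x, -x ^ (reet m + 1), -x ^ (2 * reet m + 1), x ^ (2 * reet m + 2), x ^ (3 * reet m + 2);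
     0, 0, 1, -x ^ reet m, -x ^ (2 * reet m), x ^ (2 * reet m + 1), -x ^ (3 * reet m + 1);
     0, 0, 0, 1, -x ^ reet m, x ^ (reet m + 1), 0;
     0, 0, 0, 0, 1, x, -x ^ (reet m + 1);
     0, 0, 0, 0, 0, 1, x ^ reet m;
     0, 0, 0, 0, 0, 0, 1]

/-- The Ree group generator `β(y)`. -/
def reeBeta {F : Type*} [Field F] (m : ℕ) (y : F) : Matrix (Fin 7) (Fin 7) F :=
  !![1, 0, y ^ reet m, 0, y, 0, -y ^ (reet m + 1);
     0, 1, 0, -y ^ reet m, 0, -y ^ (2 * reet m), 0;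
     0, 0, 1, 0, 0, 0, -y;
     0, 0, 0, 1, 0, -y ^ reet m, 0;
     0, 0, 0, 0, 1, 0, -y ^ reet m;
     0, 0, 0, 0, 0, 1, 0;
     0, 0, 0, 0, 0, 0, 1]

/-- The Ree group generator `γ(z)`. -/
def reeGamma {F : Type*} [Field F] (m : ℕ) (z : F) : Matrix (Fin 7) (Fin 7) F :=
  !![1, 0, 0, -z ^ reet m, 0, -z, -z ^ (2 * reet m);
     0, 1, 0, 0, -z ^ reet m, 0, z;
     0, 0, 1, 0, 0, z ^ reet m, 0;
     0, 0, 0, 1, 0, 0, -z ^ reet m;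
     0, 0, 0, 0, 1, 0, 0;
     0, 0, 0, 0, 0, 1, 0;
     0, 0, 0, 0, 0, 0, 1]

/-- `χ(x,y,z) = α(x)β(y)γ(z)`. -/
def reeChi {F : Type*} [Field F] (m : ℕ) (x y z : F) : Matrix (Fin 7) (Fin 7) F :=
  reeAlpha m x * reeBeta m y * reeGamma m z

/-- The torus element `h(k) = diag(k^ϑ, k^{1-ϑ}, k^{2ϑ-1}, 1, k^{1-2ϑ}, k^{ϑ-1}, k^{-ϑ})`. -/
def reeH {F : Type*} [Field F] (m : ℕ) (k : F) : Matrix (Fin 7) (Fin 7) F :=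
  Matrix.diagonal ![k ^ (reet m : ℤ), k ^ (1 - (reet m : ℤ)), k ^ (2 * (reet m : ℤ) - 1), 1,
    k ^ (1 - 2 * (reet m : ℤ)), k ^ ((reet m : ℤ) - 1), k ^ (-(reet m : ℤ))]


set_option maxHeartbeats 1000000

private lemma cv_2_0 {α : Type*} (x : α) (u : Fin 1 → α) : Matrix.vecCons x u 0 = x := rfl
private lemma cv_2_1 {α : Type*} (x : α) (u : Fin 1 → α) : Matrix.vecCons x u 1 = u 0 := rfl
private lemma cv_3_0 {α : Type*} (x : α) (u : Fin 2 → α) : Matrix.vecCons x u 0 = x := rfl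
private lemma cv_3_1 {α : Type*} (x : α) (u : Fin 2 → α) : Matrix.vecCons x u 1 = u 0 := rfl
private lemma cv_3_2 {α : Type*} (x : α) (u : Fin 2 → α) : Matrix.vecCons x u 2 = u 1 := rfl
private lemma cv_4_0 {α : Type*} (x : α) (u : Fin 3 → α) : Matrix.vecCons x u 0 = x := rfl
private lemma cv_4_1 {α : Type*} (x : α) (u : Fin 3 → α) : Matrix.vecCons x u 1 = u 0 := rfl
private lemma cv_4_2 {α : Type*} (x : α) (u : Fin 3 → α) : Matrix.vecCons x u 2 = u 1 := rfl
private lemma cv_4_3 {α : Type*} (x : α) (u : Fin 3 → α) : Matrix.vecCons x u 3 = u 2 := rfl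
private lemma cv_5_0 {α : Type*} (x : α) (u : Fin 4 → α) : Matrix.vecCons x u 0 = x := rfl
private lemma cv_5_1 {α : Type*} (x : α) (u : Fin 4 → α) : Matrix.vecCons x u 1 = u 0 := rfl
private lemma cv_5_2 {α : Type*} (x : α) (u : Fin 4 → α) : Matrix.vecCons x u 2 = u 1 := rfl
private lemma cv_5_3 {α : Type*} (x : α) (u : Fin 4 → α) : Matrix.vecCons x u 3 = u 2 := rfl
private lemma cv_5_4 {α : Type*} (x : α) (u : Fin 4 → α) : Matrix.vecCons x u 4 = u 3 := rfl
private lemma cv_6_0 {α : Type*} (x : α) (u : Fin 5 → α) : Matrix.vecCons x u 0 = x := rfl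
private lemma cv_6_1 {α : Type*} (x : α) (u : Fin 5 → α) : Matrix.vecCons x u 1 = u 0 := rfl
private lemma cv_6_2 {α : Type*} (x : α) (u : Fin 5 → α) : Matrix.vecCons x u 2 = u 1 := rfl
private lemma cv_6_3 {α : Type*} (x : α) (u : Fin 5 → α) : Matrix.vecCons x u 3 = u 2 := rfl
private lemma cv_6_4 {α : Type*} (x : α) (u : Fin 5 → α) : Matrix.vecCons x u 4 = u 3 := rfl
private lemma cv_6_5 {α : Type*} (x : α) (u : Fin 5 → α) : Matrix.vecCons x u 5 = u 4 := rfl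
private lemma cv_7_0 {α : Type*} (x : α) (u : Fin 6 → α) : Matrix.vecCons x u 0 = x := rfl
private lemma cv_7_1 {α : Type*} (x : α) (u : Fin 6 → α) : Matrix.vecCons x u 1 = u 0 := rfl
private lemma cv_7_2 {α : Type*} (x : α) (u : Fin 6 → α) : Matrix.vecCons x u 2 = u 1 := rfl
private lemma cv_7_3 {α : Type*} (x : α) (u : Fin 6 → α) : Matrix.vecCons x u 3 = u 2 := rfl
private lemma cv_7_4 {α : Type*} (x : α) (u : Fin 6 → α) : Matrix.vecCons x u 4 = u 3 := rfl
private lemma cv_7_5 {α : Type*} (x : α) (u : Fin 6 → α) : Matrix.vecCons x u 5 = u 4 := rfl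
private lemma cv_7_6 {α : Type*} (x : α) (u : Fin 6 → α) : Matrix.vecCons x u 6 = u 5 := rfl
private lemma fm7_0 (h : 0 < 7) : (⟨0, h⟩ : Fin 7) = 0 := rfl
private lemma fm7_1 (h : 1 < 7) : (⟨1, h⟩ : Fin 7) = 1 := rfl
private lemma fm7_2 (h : 2 < 7) : (⟨2, h⟩ : Fin 7) = 2 := rfl
private lemma fm7_3 (h : 3 < 7) : (⟨3, h⟩ : Fin 7) = 3 := rfl
private lemma fm7_4 (h : 4 < 7) : (⟨4, h⟩ : Fin 7) = 4 := rfl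
private lemma fm7_5 (h : 5 < 7) : (⟨5, h⟩ : Fin 7) = 5 := rfl
private lemma fm7_6 (h : 6 < 7) : (⟨6, h⟩ : Fin 7) = 6 := rfl

private lemma ab_eq {F : Type*} [Field F] (m : ℕ) (x y : F) :
    reeAlpha m x * reeBeta m y =
 !![1, -x ^ (reet m), y ^ (reet m) - x ^ (reet m + 1), x ^ (reet m) * y ^ (reet m), y + x ^ (3 * reet m + 1), x ^ (reet m) * y ^ (2 * reet m), -y ^ (reet m + 1) + x ^ (reet m + 1) * y - x ^ (3 * reet m + 1) * y ^ (reet m) + x ^ (4 * reet m + 2);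
   0, 1, -x, -y ^ (reet m) - x ^ (reet m + 1), -x ^ (2 * reet m + 1), -y ^ (2 * reet m) + x ^ (reet m + 1) * y ^ (reet m) + x ^ (2 * reet m + 2), x * y + x ^ (2 * reet m + 1) * y ^ (reet m) + x ^ (3 * reet m + 2);
   0, 0, 1, -x ^ (reet m), -x ^ (2 * reet m), x ^ (reet m) * y ^ (reet m) + x ^ (2 * reet m + 1), -y + x ^ (2 * reet m) * y ^ (reet m) - x ^ (3 * reet m + 1);
   0, 0, 0, 1, -x ^ (reet m), -y ^ (reet m) + x ^ (reet m + 1), x ^ (reet m) * y ^ (reet m);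
   0, 0, 0, 0, 1, x, -y ^ (reet m) - x ^ (reet m + 1);
   0, 0, 0, 0, 0, 1, x ^ (reet m);
   0, 0, 0, 0, 0, 0, 1] := by
  unfold reeAlpha reeBeta
  ext i j
  fin_cases i <;> fin_cases j <;>
    simp only [fm7_0, fm7_1, fm7_2, fm7_3, fm7_4, fm7_5, fm7_6, Matrix.mul_apply, Fin.sum_univ_seven, Matrix.of_apply, Matrix.cons_val_zero, cv_2_0, cv_2_1, cv_3_0, cv_3_1, cv_3_2, cv_4_0, cv_4_1, cv_4_2, cv_4_3, cv_5_0, cv_5_1, cv_5_2, cv_5_3, cv_5_4, cv_6_0, cv_6_1, cv_6_2, cv_6_3, cv_6_4, cv_6_5, cv_7_0, cv_7_1, cv_7_2, cv_7_3, cv_7_4, cv_7_5, cv_7_6] <;> ring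

private lemma chi_eq {F : Type*} [Field F] (m : ℕ) (x y z : F) :
    reeChi m x y z =
 !![1, -x ^ (reet m), y ^ (reet m) - x ^ (reet m + 1), -z ^ (reet m) + x ^ (reet m) * y ^ (reet m), y + x ^ (reet m) * z ^ (reet m) + x ^ (3 * reet m + 1), -z + y ^ (reet m) * z ^ (reet m) + x ^ (reet m) * y ^ (2 * reet m) - x ^ (reet m + 1) * z ^ (reet m), -z ^ (2 * reet m) - y ^ (reet m + 1) - x ^ (reet m) * z - x ^ (reet m) * y ^ (reet m) * z ^ (reet m) + x ^ (reet m + 1) * y - x ^ (3 * reet m + 1) * y ^ (reet m) + x ^ (4 * reet m + 2);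
   0, 1, -x, -y ^ (reet m) - x ^ (reet m + 1), -z ^ (reet m) - x ^ (2 * reet m + 1), -y ^ (2 * reet m) - x * z ^ (reet m) + x ^ (reet m + 1) * y ^ (reet m) + x ^ (2 * reet m + 2), z + y ^ (reet m) * z ^ (reet m) + x * y + x ^ (reet m + 1) * z ^ (reet m) + x ^ (2 * reet m + 1) * y ^ (reet m) + x ^ (3 * reet m + 2);
   0, 0, 1, -x ^ (reet m), -x ^ (2 * reet m), z ^ (reet m) + x ^ (reet m) * y ^ (reet m) + x ^ (2 * reet m + 1), -y + x ^ (reet m) * z ^ (reet m) + x ^ (2 * reet m) * y ^ (reet m) - x ^ (3 * reet m + 1);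
   0, 0, 0, 1, -x ^ (reet m), -y ^ (reet m) + x ^ (reet m + 1), -z ^ (reet m) + x ^ (reet m) * y ^ (reet m);
   0, 0, 0, 0, 1, x, -y ^ (reet m) - x ^ (reet m + 1);
   0, 0, 0, 0, 0, 1, x ^ (reet m);
   0, 0, 0, 0, 0, 0, 1] := by
  unfold reeChi
  rw [ab_eq]
  unfold reeGamma
  ext i j
  fin_cases i <;> fin_cases j <;>
    simp only [fm7_0, fm7_1, fm7_2, fm7_3, fm7_4, fm7_5, fm7_6, Matrix.mul_apply, Fin.sum_univ_seven, Matrix.of_apply, Matrix.cons_val_zero, cv_2_0, cv_2_1, cv_3_0, cv_3_1, cv_3_2, cv_4_0, cv_4_1, cv_4_2, cv_4_3, cv_5_0, cv_5_1, cv_5_2, cv_5_3, cv_5_4, cv_6_0, cv_6_1, cv_6_2, cv_6_3, cv_6_4, cv_6_5, cv_7_0, cv_7_1, cv_7_2, cv_7_3, cv_7_4, cv_7_5, cv_7_6] <;> ring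

private lemma chi00 {F : Type*} [Field F] (m : ℕ) (a : F) :
    reeChi m 0 0 a = reeGamma m a := by
  have ht : reet m ≠ 0 := by simp [reet]
  rw [chi_eq]
  unfold reeGamma
  ext i j
  fin_cases i <;> fin_cases j <;>
    simp only [fm7_0, fm7_1, fm7_2, fm7_3, fm7_4, fm7_5, fm7_6, Matrix.mul_apply, Fin.sum_univ_seven, Matrix.of_apply, Matrix.cons_val_zero, cv_2_0, cv_2_1, cv_3_0, cv_3_1, cv_3_2, cv_4_0, cv_4_1, cv_4_2, cv_4_3, cv_5_0, cv_5_1, cv_5_2, cv_5_3, cv_5_4, cv_6_0, cv_6_1, cv_6_2, cv_6_3, cv_6_4, cv_6_5, cv_7_0, cv_7_1, cv_7_2, cv_7_3, cv_7_4, cv_7_5, cv_7_6] <;>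
    simp [zero_pow, ht]

private lemma gamma_comm {F : Type*} [Field F] (m : ℕ) (a x y z : F) :
    reeGamma m a * reeChi m x y z = reeChi m x y z * reeGamma m a := by
  rw [chi_eq]
  unfold reeGamma
  ext i j
  fin_cases i <;> fin_cases j <;>
    simp only [fm7_0, fm7_1, fm7_2, fm7_3, fm7_4, fm7_5, fm7_6, Matrix.mul_apply, Fin.sum_univ_seven, Matrix.of_apply, Matrix.cons_val_zero, cv_2_0, cv_2_1, cv_3_0, cv_3_1, cv_3_2, cv_4_0, cv_4_1, cv_4_2, cv_4_3, cv_5_0, cv_5_1, cv_5_2, cv_5_3, cv_5_4, cv_6_0, cv_6_1, cv_6_2, cv_6_3, cv_6_4, cv_6_5, cv_7_0, cv_7_1, cv_7_2, cv_7_3, cv_7_4, cv_7_5, cv_7_6] <;> ring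

private lemma zp {F : Type*} [Field F] (k : F) (hk : k ≠ 0) (n : ℕ) :
    (k ^ (-1 : ℤ)) ^ n = k ^ (-(n : ℤ)) := by
  rw [← zpow_natCast (k ^ (-1 : ℤ)) n, ← _root_.zpow_mul]
  norm_num

private lemma gamma_h {F : Type*} [Field F] (m : ℕ) (a k : F) (hk : k ≠ 0) :
    reeGamma m a * reeH m k = reeH m k * reeGamma m (k ^ (-1 : ℤ) * a) := by
  have hz : ∀ p q : ℤ, k ^ p * k ^ q = k ^ (p + q) := fun p q => (zpow_add₀ hk p q).symm
  unfold reeGamma reeH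
  ext i j
  fin_cases i <;> fin_cases j <;>
    simp only [Matrix.mul_diagonal, Matrix.diagonal_mul, fm7_0, fm7_1, fm7_2, fm7_3, fm7_4, fm7_5, fm7_6, Matrix.of_apply, Matrix.cons_val_zero, cv_2_0, cv_2_1, cv_3_0, cv_3_1, cv_3_2, cv_4_0, cv_4_1, cv_4_2, cv_4_3, cv_5_0, cv_5_1, cv_5_2, cv_5_3, cv_5_4, cv_6_0, cv_6_1, cv_6_2, cv_6_3, cv_6_4, cv_6_5, cv_7_0, cv_7_1, cv_7_2, cv_7_3, cv_7_4, cv_7_5, cv_7_6] <;>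
    (try simp only [mul_pow, zp k hk, mul_one, one_mul, mul_neg, neg_mul, neg_neg, mul_zero, zero_mul, neg_zero]) <;>
    try rfl
  all_goals
    try push_cast
    try simp only [two_mul, zpow_sub₀ hk, zpow_add₀ hk, _root_.zpow_neg, zpow_one]
    try field_simp
    try ring
    try tauto

/-- `χ(0,0,a)` commutes with `χ(x,y,z)`, and
`χ(0,0,a)^{χ(x,y,z)h(k)} = χ(0,0,k^{−1}a)`. -/
theorem statement_11 (m : ℕ) (hm : Odd m) (hm3 : 3 ≤ m)
    (F : Type*) [Field F] [Fintype F] (hF : Fintype.card F = 3 ^ m)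
    (a x y z : F) (k : F) (hk : k ≠ 0) :
    reeChi m 0 0 a * reeChi m x y z = reeChi m x y z * reeChi m 0 0 a ∧
    (reeChi m x y z * reeH m k)⁻¹ * reeChi m 0 0 a * (reeChi m x y z * reeH m k)
      = reeChi m 0 0 (k ^ (-1 : ℤ) * a) := by
  have comm : ∀ b : F, reeChi m 0 0 b * reeChi m x y z = reeChi m x y z * reeChi m 0 0 b := by
    intro b
    rw [chi00]
    exact (gamma_comm m b x y z).symm ▸ (gamma_comm m b x y z)
  refine ⟨comm a, ?_⟩
  have hdchi : (reeChi m x y z).det = 1 := by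
    rw [chi_eq]
    rw [Matrix.det_of_upperTriangular (by
      intro i j hij
      fin_cases i <;> fin_cases j <;> first | rfl | exact absurd hij (by decide))]
    simp [Fin.prod_univ_seven, fm7_0, fm7_1, fm7_2, fm7_3, fm7_4, fm7_5, fm7_6, Matrix.of_apply, cv_2_0, cv_2_1, cv_3_0, cv_3_1, cv_3_2, cv_4_0, cv_4_1, cv_4_2, cv_4_3, cv_5_0, cv_5_1, cv_5_2, cv_5_3, cv_5_4, cv_6_0, cv_6_1, cv_6_2, cv_6_3, cv_6_4, cv_6_5, cv_7_0, cv_7_1, cv_7_2, cv_7_3, cv_7_4, cv_7_5, cv_7_6]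
  have hdH : (reeH m k).det ≠ 0 := by
    unfold reeH
    rw [Matrix.det_diagonal]
    refine Finset.prod_ne_zero_iff.mpr fun i _ => ?_
    fin_cases i <;>
      simp only [fm7_0, fm7_1, fm7_2, fm7_3, fm7_4, fm7_5, fm7_6, cv_2_0, cv_2_1, cv_3_0, cv_3_1, cv_3_2, cv_4_0, cv_4_1, cv_4_2, cv_4_3, cv_5_0, cv_5_1, cv_5_2, cv_5_3, cv_5_4, cv_6_0, cv_6_1, cv_6_2, cv_6_3, cv_6_4, cv_6_5, cv_7_0, cv_7_1, cv_7_2, cv_7_3, cv_7_4, cv_7_5, cv_7_6] <;>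
      first | exact zpow_ne_zero _ hk | exact one_ne_zero
  have hA : IsUnit (reeChi m x y z * reeH m k).det := by
    rw [Matrix.det_mul, hdchi, one_mul]
    exact hdH.isUnit
  have key : reeChi m 0 0 a * (reeChi m x y z * reeH m k)
      = (reeChi m x y z * reeH m k) * reeChi m 0 0 (k ^ (-1 : ℤ) * a) := by
    rw [← Matrix.mul_assoc, comm a, Matrix.mul_assoc, chi00, chi00, gamma_h m a k hk,
      Matrix.mul_assoc]
  rw [Matrix.mul_assoc, key, ← Matrix.mul_assoc, Matrix.nonsing_inv_mul _ hA, Matrix.one_mul]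
end
end
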